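/- Let G₁ ∈ Cat_{n,d}(k), G ∈ SN(G₁), and G' ∈ Ω^B_n(d) adjacent to G. Then there exists at most one multigraph G₂ ∈ Cat_{n,d}(k) such that (G₁,G₂) is a perfect pair and ψ_{G₁,G₂}(G) = G'. -/
import Mathlib


open Finset

/-- A bipartite multigraph on `[n] ⊔ [m]` encoded by its adjacency (multiplicity) matrix. -/
def IsReg (n d : ℕ) (A : Fin n → Fin n → ℕ) : Prop :=
  (∀ i, ∑ j, A i j = d) ∧ (∀ j, ∑ i, A i j = d)

/-- A multigraph is simple if all multiplicities are at most one. -/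
def IsSimpleG {n m : ℕ} (A : Fin n → Fin m → ℕ) : Prop := ∀ i j, A i j ≤ 1

/-- The simple switching `⟨i,i',j,j'⟩`: replace the edges `(i,j)` and `(i',j')` by
`(i,j')` and `(i',j)`. -/
def switchM {n m : ℕ} (A : Fin n → Fin m → ℕ) (i i' : Fin n) (j j' : Fin m) :
    Fin n → Fin m → ℕ :=
  fun a b =>
    if a = i ∧ b = j then A a b - 1
    else if a = i' ∧ b = j' then A a b - 1
    else if a = i ∧ b = j' then A a b + 1
    else if a = i' ∧ b = j then A a b + 1
    else A a b

/-- Two multigraphs are adjacent if one is obtained from the other by a simple switching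
operated on two non-incident edges. -/
def AdjacentM {n : ℕ} (A B : Fin n → Fin n → ℕ) : Prop :=
  ∃ i i' j j', i ≠ i' ∧ j ≠ j' ∧ 0 < A i j ∧ 0 < A i' j' ∧ B = switchM A i i' j j'

/-- `Cat_{n,d}(k)`: `d`-regular bipartite multigraphs with exactly `k` multiplicity-2 edges,
no two of them incident, and no multiplicities `≥ 3`. -/
def InCat (n d k : ℕ) (A : Fin n → Fin n → ℕ) : Prop :=
  IsReg n d A ∧ (∀ i j, A i j ≤ 2) ∧
    (Finset.univ.filter fun p : Fin n × Fin n => A p.1 p.2 = 2).card = k ∧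
    (∀ i j j', A i j = 2 → A i j' = 2 → j = j') ∧
    (∀ i i' j, A i j = 2 → A i' j = 2 → i = i')

/-- The set of multiedges (multiplicity-2 edges) of a multigraph. -/
def MEs {n : ℕ} (A : Fin n → Fin n → ℕ) : Finset (Fin n × Fin n) :=
  Finset.univ.filter fun p => A p.1 p.2 = 2

/-- The data of a simple path starting at a multigraph `A ∈ Cat_{n,d}(k)`: to each
multiedge `e = (i_s, j_s)` of `A` it assigns the auxiliary edge `f e = (i'_s, j'_s)` used by
the corresponding simple switching `⟨i_s, i'_s, j_s, j'_s⟩`.  The auxiliary left (resp. right)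
vertices are pairwise distinct, avoid all multiedge left (resp. right) vertices, and the
switching creates no multiple edges. -/
def SimplePathData {n : ℕ} (A : Fin n → Fin n → ℕ)
    (f : Fin n × Fin n → Fin n × Fin n) : Prop :=
  (∀ e ∈ MEs A, 0 < A (f e).1 (f e).2 ∧ A (f e).1 e.2 = 0 ∧ A e.1 (f e).2 = 0 ∧
    ∀ e' ∈ MEs A, (f e).1 ≠ e'.1 ∧ (f e).2 ≠ e'.2) ∧
  ∀ e ∈ MEs A, ∀ e' ∈ MEs A, e ≠ e' → (f e).1 ≠ (f e').1 ∧ (f e).2 ≠ (f e').2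

/-- The endpoint of the simple path with data `f` starting at `A`: each multiedge
`(i_s,j_s)` loses one parallel edge, the auxiliary edge `(i'_s,j'_s)` is removed, and the
edges `(i_s,j'_s)` and `(i'_s,j_s)` are added. -/
def endpointM {n : ℕ} (A : Fin n → Fin n → ℕ) (f : Fin n × Fin n → Fin n × Fin n) :
    Fin n → Fin n → ℕ :=
  fun a b =>
    A a b + ((MEs A).filter fun e => (a = e.1 ∧ b = (f e).2) ∨ (a = (f e).1 ∧ b = e.2)).card
      - ((MEs A).filter fun e => (a = e.1 ∧ b = e.2) ∨ (a = (f e).1 ∧ b = (f e).2)).card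

/-- The `s`-neighborhood of a multigraph: all endpoints of simple paths starting at it. -/
def SN {n : ℕ} (A : Fin n → Fin n → ℕ) : Set (Fin n → Fin n → ℕ) :=
  {B | ∃ f, SimplePathData A f ∧ B = endpointM A f}

/-- The anti-expansion measure `Z(G)` of a simple graph. -/
def Zae {n : ℕ} (A : Fin n → Fin n → ℕ) : ℕ :=
  (Finset.univ.filter fun p : Fin n × Fin n =>
    0 < A p.1 p.2 ∧ ∃ k, k ≠ p.1 ∧ 0 < A k p.2 ∧
      2 ≤ (Finset.univ.filter fun j => 0 < A p.1 j ∧ 0 < A k j).card).card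

/-- Left vertex `i` is incident to no multiedge. -/
def NoMultiRow {n : ℕ} (A : Fin n → Fin n → ℕ) (i : Fin n) : Prop := ∀ j, A i j ≤ 1

/-- Right vertex `j` is incident to no multiedge. -/
def NoMultiCol {n : ℕ} (A : Fin n → Fin n → ℕ) (j : Fin n) : Prop := ∀ i, A i j ≤ 1

/-- A perfect pair `(G₁,G₂) ∈ C_{n,d}(k)`: adjacent category-`k` multigraphs connected by a
simple switching `⟨i,i',j,j'⟩` whose vertices are neither incident to a multiedge nor
adjacent to a vertex incident to a multiedge. -/
def PerfectPair (n d k : ℕ) (A₁ A₂ : Fin n → Fin n → ℕ) : Prop :=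
  InCat n d k A₁ ∧ InCat n d k A₂ ∧
  ∃ i i' j j', i ≠ i' ∧ j ≠ j' ∧ 0 < A₁ i j ∧ 0 < A₁ i' j' ∧
    A₂ = switchM A₁ i i' j j' ∧
    NoMultiRow A₁ i ∧ NoMultiRow A₁ i' ∧ NoMultiCol A₁ j ∧ NoMultiCol A₁ j' ∧
    (∀ b, 0 < A₁ i b → NoMultiCol A₁ b) ∧ (∀ b, 0 < A₁ i' b → NoMultiCol A₁ b) ∧
    (∀ a, 0 < A₁ a j → NoMultiRow A₁ a) ∧ (∀ a, 0 < A₁ a j' → NoMultiRow A₁ a)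

open scoped Classical in
/-- The left representative used by the canonical bijection `ψ_{G₁,G₂}` of a perfect pair:
for the switching vertex `i` (with right vertex `j`), it is `i` itself if `(i,j)` is still an
edge of `G ∈ SN(G₁)`, and otherwise the (unique) left vertex incident to a multiedge of `G₁`
which carries an edge to `j` in `G`. -/
noncomputable def leftRep {n : ℕ} (A₁ G : Fin n → Fin n → ℕ) (i j : Fin n) : Fin n :=
  if 0 < G i j then i
  else if h : ∃ r, 0 < G r j ∧ ∃ b, A₁ r b = 2 then h.choose else i

/-- The canonical bijection `ψ_{G₁,G₂}` of Proposition `bijection`, evaluated at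
`G ∈ SN(G₁)`, when `G₂ = switch G₁ i i' j j'`. -/
noncomputable def psiMap {n : ℕ} (A₁ G : Fin n → Fin n → ℕ) (i i' j j' : Fin n) :
    Fin n → Fin n → ℕ :=
  switchM G (leftRep A₁ G i j) (leftRep A₁ G i' j') j j'

/-- Conditions on the switching of a perfect pair with base graph `A₁`. -/
def PerfectSwitch {n : ℕ} (A₁ : Fin n → Fin n → ℕ) (i i' j j' : Fin n) : Prop :=
  i ≠ i' ∧ j ≠ j' ∧ 0 < A₁ i j ∧ 0 < A₁ i' j' ∧
    NoMultiRow A₁ i ∧ NoMultiRow A₁ i' ∧ NoMultiCol A₁ j ∧ NoMultiCol A₁ j' ∧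
    (∀ b, 0 < A₁ i b → NoMultiCol A₁ b) ∧ (∀ b, 0 < A₁ i' b → NoMultiCol A₁ b) ∧
    (∀ a, 0 < A₁ a j → NoMultiRow A₁ a) ∧ (∀ a, 0 < A₁ a j' → NoMultiRow A₁ a)


section Aux12
variable {n : ℕ}

lemma mem_MEs' {A : Fin n → Fin n → ℕ} {e : Fin n × Fin n} :
    e ∈ MEs A ↔ A e.1 e.2 = 2 := by simp [MEs]

lemma switch_comm' (A : Fin n → Fin n → ℕ) {i i' : Fin n} {j j' : Fin n}
    (hii : i ≠ i') (hjj : j ≠ j') :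
    switchM A i' i j' j = switchM A i i' j j' := by
  funext x y
  simp only [switchM]
  by_cases hxi : x = i <;> by_cases hxi' : x = i' <;> by_cases hyj : y = j <;>
    by_cases hyj' : y = j' <;> simp_all

lemma switch_self_le (A : Fin n → Fin n → ℕ) (p : Fin n) (j j' : Fin n) (x y : Fin n) :
    switchM A p p j j' x y ≤ A x y := by
  simp only [switchM]
  split_ifs <;> first | omega | tauto

lemma adj_exists_gt {A B : Fin n → Fin n → ℕ} (h : AdjacentM A B) :
    ∃ x y, A x y < B x y := by
  obtain ⟨i, i', j, j', hii, hjj, _, _, rfl⟩ := h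
  refine ⟨i', j, ?_⟩
  simp only [switchM]
  split_ifs with h1 h2 h3 h4
  · exact absurd h1.1.symm hii
  · exact absurd h2.2 hjj
  · exact absurd h3.1.symm hii
  · omega
  · simp at h4

lemma dec_iff (A : Fin n → Fin n → ℕ) {p p' j j' : Fin n}
    (hpp : p ≠ p') (hjj : j ≠ j') (h1 : 0 < A p j) (h2 : 0 < A p' j') (x y : Fin n) :
    switchM A p p' j j' x y < A x y ↔ ((x = p ∧ y = j) ∨ (x = p' ∧ y = j')) := by
  simp only [switchM]
  split_ifs with c1 c2 c3 c4
  · obtain ⟨rfl, rfl⟩ := c1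
    constructor
    · intro _; exact Or.inl ⟨rfl, rfl⟩
    · intro _; omega
  · obtain ⟨rfl, rfl⟩ := c2
    constructor
    · intro _; exact Or.inr ⟨rfl, rfl⟩
    · intro _; omega
  · constructor
    · intro h; omega
    · rintro (⟨rfl, rfl⟩ | ⟨rfl, rfl⟩)
      · exact absurd ⟨rfl, rfl⟩ c1
      · exact absurd ⟨rfl, rfl⟩ c2
  · constructor
    · intro h; omega
    · rintro (⟨rfl, rfl⟩ | ⟨rfl, rfl⟩)
      · exact absurd ⟨rfl, rfl⟩ c1
      · exact absurd ⟨rfl, rfl⟩ c2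
  · constructor
    · intro h; omega
    · rintro (⟨rfl, rfl⟩ | ⟨rfl, rfl⟩)
      · exact absurd ⟨rfl, rfl⟩ c1
      · exact absurd ⟨rfl, rfl⟩ c2

lemma col_formula (A : Fin n → Fin n → ℕ) (f : Fin n × Fin n → Fin n × Fin n)
    {c : Fin n} (hc : NoMultiCol A c) (x : Fin n) :
    endpointM A f x c =
      A x c + ((MEs A).filter fun e => x = e.1 ∧ c = (f e).2).card
        - ((MEs A).filter fun e => x = (f e).1 ∧ c = (f e).2).card := by
  have hne : ∀ e ∈ MEs A, c ≠ e.2 := by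
    intro e he h
    have h2 : A e.1 e.2 = 2 := mem_MEs'.mp he
    have := hc e.1
    rw [← h] at h2; omega
  have e1 : ((MEs A).filter fun e =>
      (x = e.1 ∧ c = (f e).2) ∨ (x = (f e).1 ∧ c = e.2)) =
      (MEs A).filter fun e => x = e.1 ∧ c = (f e).2 := by
    apply Finset.filter_congr
    intro e he
    have := hne e he
    constructor
    · rintro (h | h); · exact h
      exact absurd h.2 this
    · exact Or.inl
  have e2 : ((MEs A).filter fun e =>
      (x = e.1 ∧ c = e.2) ∨ (x = (f e).1 ∧ c = (f e).2)) =
      (MEs A).filter fun e => x = (f e).1 ∧ c = (f e).2 := by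
    apply Finset.filter_congr
    intro e he
    have := hne e he
    constructor
    · rintro (h | h); · exact absurd h.2 this
      exact h
    · exact Or.inr
  simp only [endpointM]
  rw [e1, e2]

lemma rep_facts (A G : Fin n → Fin n → ℕ) (f : Fin n × Fin n → Fin n × Fin n)
    (hf : SimplePathData A f) (hG : G = endpointM A f) {c : Fin n}
    (hc : NoMultiCol A c) (hrow : ∀ x, 0 < A x c → NoMultiRow A x) :
    (∀ i, 0 < A i c → 0 < G (leftRep A G i c) c) ∧
      (∀ i a, 0 < A i c → 0 < A a c →
        leftRep A G i c = leftRep A G a c → i = a) := by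
  have finj : ∀ e ∈ MEs A, ∀ e' ∈ MEs A, (f e).2 = (f e').2 → e = e' := by
    intro e he e' he' h
    by_contra hne
    exact (hf.2 e he e' he' hne).2 h
  have F1 : ∀ x, 0 < A x c → G x c = 0 →
      ∃ e ∈ MEs A, x = (f e).1 ∧ c = (f e).2 := by
    intro x hx h0
    rw [hG, col_formula A f hc] at h0
    by_contra hno
    push_neg at hno
    have hemp : ((MEs A).filter fun e => x = (f e).1 ∧ c = (f e).2) = ∅ := by
      apply Finset.filter_eq_empty_iff.mpr
      intro e he hcon
      exact hno e he hcon.1 hcon.2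
    rw [hemp] at h0
    simp at h0
    omega
  have F2 : ∀ e ∈ MEs A, (f e).2 = c → G e.1 c = 1 ∧ ∃ β, A e.1 β = 2 := by
    intro e he hfe
    refine ⟨?_, ⟨e.2, mem_MEs'.mp he⟩⟩
    have hT : ((MEs A).filter fun e' => e.1 = e'.1 ∧ c = (f e').2).card = 1 := by
      rw [Finset.card_eq_one]
      refine ⟨e, ?_⟩
      ext e'
      simp only [Finset.mem_filter, Finset.mem_singleton]
      constructor
      · rintro ⟨he', _, h2⟩
        exact finj e' he' e he (h2.symm.trans hfe.symm)
      · rintro rfl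
        exact ⟨he, rfl, hfe.symm⟩
    have hS : ((MEs A).filter fun e' => e.1 = (f e').1 ∧ c = (f e').2).card = 0 := by
      rw [Finset.card_eq_zero]
      apply Finset.filter_eq_empty_iff.mpr
      intro e' he' hcon
      have hee : e' = e := finj e' he' e he (hcon.2.symm.trans hfe.symm)
      subst hee
      exact ((hf.1 e' he').2.2.2 e' he').1 hcon.1.symm
    have hA : A e.1 c = 0 := by rw [← hfe]; exact (hf.1 e he).2.2.1
    rw [hG, col_formula A f hc, hT, hS, hA]
  have mixed : ∀ i a, 0 < A i c → 0 < A a c → 0 < G i c → ¬ 0 < G a c →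
      leftRep A G i c = leftRep A G a c → False := by
    intro i a hi ha h0i h0a heq
    obtain ⟨e, he, hae, hce⟩ := F1 a ha (by omega)
    obtain ⟨hG1, hβ⟩ := F2 e he hce.symm
    have hex : ∃ r, 0 < G r c ∧ ∃ β, A r β = 2 := ⟨e.1, by omega, hβ⟩
    rw [leftRep, if_pos h0i, leftRep, if_neg h0a, dif_pos hex] at heq
    obtain ⟨β, hβ'⟩ := hex.choose_spec.2
    have hle := hrow i hi β
    rw [heq] at hle
    omega
  constructor
  · intro i hi
    by_cases h0 : 0 < G i c
    · rw [leftRep, if_pos h0]; exact h0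
    · obtain ⟨e, he, hxe, hce⟩ := F1 i hi (by omega)
      obtain ⟨hG1, hβ⟩ := F2 e he hce.symm
      have hex : ∃ r, 0 < G r c ∧ ∃ β, A r β = 2 := ⟨e.1, by omega, hβ⟩
      rw [leftRep, if_neg h0, dif_pos hex]
      exact hex.choose_spec.1
  · intro i a hi ha heq
    by_cases h0i : 0 < G i c <;> by_cases h0a : 0 < G a c
    · rw [leftRep, if_pos h0i, leftRep, if_pos h0a] at heq; exact heq
    · exact absurd (mixed i a hi ha h0i h0a heq) (fun h => h)
    · exact absurd (mixed a i ha hi h0a h0i heq.symm) (fun h => h)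
    · obtain ⟨e, he, hie, hce⟩ := F1 i hi (by omega)
      obtain ⟨e', he', hae, hce'⟩ := F1 a ha (by omega)
      have hee : e = e' := finj e he e' he' (hce.symm.trans hce')
      rw [hie, hae, hee]

end Aux12

/-- Let `G₁ ∈ Cat_{n,d}(k)`, `G ∈ SN(G₁)` and `G'` a simple graph adjacent
to `G`.  Then there is at most one multigraph `G₂` such that `(G₁,G₂)` is a perfect pair and
`ψ_{G₁,G₂}(G) = G' ∈ SN(G₂)`. -/
theorem stmt12 (n d k : ℕ) (hk : 1 ≤ k) (hm : k ≤ d ^ 2 * ⌊Real.log (n : ℝ)⌋₊)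
    (A₁ G G' : Fin n → Fin n → ℕ) (hA₁ : InCat n d k A₁) (hG : G ∈ SN A₁)
    (hG' : IsSimpleG G') (hadj : AdjacentM G G')
    (A₂ A₂' : Fin n → Fin n → ℕ) (i i' j j' a a' b b' : Fin n)
    (h₂ : InCat n d k A₂) (hps : PerfectSwitch A₁ i i' j j')
    (hsw : A₂ = switchM A₁ i i' j j')
    (h₂' : InCat n d k A₂') (hps' : PerfectSwitch A₁ a a' b b')
    (hsw' : A₂' = switchM A₁ a a' b b')
    (hpsi : psiMap A₁ G i i' j j' = G') (hpsi' : psiMap A₁ G a a' b b' = G')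
    (hmem : G' ∈ SN A₂) (hmem' : G' ∈ SN A₂') :
    A₂ = A₂' := by
  obtain ⟨f, hf, hGdef⟩ := hG
  obtain ⟨hii, hjj, hij1, hij2, hNRi, hNRi', hNCj, hNCj', _, _, hRj, hRj'⟩ := hps
  obtain ⟨haa, hbb, hab1, hab2, hNRa, hNRa', hNCb, hNCb', _, _, hRb, hRb'⟩ := hps'
  obtain ⟨Pj, Uj⟩ := rep_facts A₁ G f hf hGdef hNCj hRj
  obtain ⟨Pj', Uj'⟩ := rep_facts A₁ G f hf hGdef hNCj' hRj'
  obtain ⟨Pb, Ub⟩ := rep_facts A₁ G f hf hGdef hNCb hRb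
  obtain ⟨Pb', Ub'⟩ := rep_facts A₁ G f hf hGdef hNCb' hRb'
  simp only [psiMap] at hpsi hpsi'
  obtain ⟨p, hp⟩ : ∃ x, leftRep A₁ G i j = x := ⟨_, rfl⟩
  obtain ⟨p', hp'⟩ : ∃ x, leftRep A₁ G i' j' = x := ⟨_, rfl⟩
  obtain ⟨q, hq⟩ : ∃ x, leftRep A₁ G a b = x := ⟨_, rfl⟩
  obtain ⟨q', hq'⟩ : ∃ x, leftRep A₁ G a' b' = x := ⟨_, rfl⟩
  rw [hp, hp'] at hpsi
  rw [hq, hq'] at hpsi'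
  have hpj : 0 < G p j := by rw [← hp]; exact Pj i hij1
  have hpj' : 0 < G p' j' := by rw [← hp']; exact Pj' i' hij2
  have hqb : 0 < G q b := by rw [← hq]; exact Pb a hab1
  have hqb' : 0 < G q' b' := by rw [← hq']; exact Pb' a' hab2
  obtain ⟨x, y, hgt⟩ := adj_exists_gt hadj
  have hppne : p ≠ p' := by
    rintro rfl
    rw [← hpsi] at hgt
    exact absurd hgt (not_lt.mpr (switch_self_le G p j j' x y))
  have hqqne : q ≠ q' := by
    rintro rfl
    rw [← hpsi'] at hgt
    exact absurd hgt (not_lt.mpr (switch_self_le G q b b' x y))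
  have key : ∀ u v, ((u = p ∧ v = j) ∨ (u = p' ∧ v = j')) ↔
      ((u = q ∧ v = b) ∨ (u = q' ∧ v = b')) := by
    intro u v
    rw [← dec_iff G hppne hjj hpj hpj' u v, ← dec_iff G hqqne hbb hqb hqb' u v,
      hpsi, hpsi']
  rcases (key p j).mp (Or.inl ⟨rfl, rfl⟩) with ⟨hpq, hjb⟩ | ⟨hpq, hjb⟩
  · -- Case A : p = q, j = b
    subst b
    rcases (key p' j').mp (Or.inr ⟨rfl, rfl⟩) with ⟨_, hj'b⟩ | ⟨hpq', hj'b⟩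
    · exact absurd hj'b.symm hjj
    · subst b'
      have hia : i = a := Uj i a hij1 hab1 (hp.trans (hpq.trans hq.symm))
      have hia' : i' = a' := Uj' i' a' hij2 hab2 (hp'.trans (hpq'.trans hq'.symm))
      rw [hsw, hsw', hia, hia']
  · -- Case B : p = q', j = b'
    subst b'
    rcases (key p' j').mp (Or.inr ⟨rfl, rfl⟩) with ⟨hpq', hj'b⟩ | ⟨_, hj'b⟩
    · subst b
      have hia : i = a' := Uj i a' hij1 hab2 (hp.trans (hpq.trans hq'.symm))
      have hia' : i' = a := Uj' i' a hij2 hab1 (hp'.trans (hpq'.trans hq.symm))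
      rw [hsw, hsw', ← hia, ← hia', switch_comm' A₁ hii hjj]
    · exact absurd hj'b.symm hjj
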